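/- Let f ∈ A_sect(ℝ^d). Then for every integer k ≥ 0 there exists ε > 0 such that the series S^{k,ε}_∞[f] = Σ_{α,β} (ε^{|α|+|β|}/max(|α|,|β|)!) ‖x^β ∂^α f‖_{H^k} converges (is finite). -/

import Mathlib

open scoped BigOperators

/-- `|α| = α_1 + ⋯ + α_d`. -/
def msize {d : ℕ} (α : Fin d → ℕ) : ℕ := ∑ i, α i

/-- Multi-index factorial `α! = α_1! ⋯ α_d!`. -/
def mfact {d : ℕ} (α : Fin d → ℕ) : ℕ := ∏ i, Nat.factorial (α i)

/-- Multi-index binomial coefficient. -/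
def mchoose {d : ℕ} (α β : Fin d → ℕ) : ℕ := ∏ i, Nat.choose (α i) (β i)

/-- Monomial `x^β = x_1^{β_1} ⋯ x_d^{β_d}`. -/
def mpow {d : ℕ} (x : EuclideanSpace ℝ (Fin d)) (β : Fin d → ℕ) : ℝ := ∏ i, (x i) ^ (β i)

/-- The partial derivative `∂_i`. -/
noncomputable def pd1 {d : ℕ} (i : Fin d) (f : EuclideanSpace ℝ (Fin d) → ℝ) :
    EuclideanSpace ℝ (Fin d) → ℝ :=
  fun x => fderiv ℝ f x (EuclideanSpace.single i 1)

/-- The mixed partial derivative `∂^α = ∂_1^{α_1} ⋯ ∂_d^{α_d}`. -/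
noncomputable def pd {d : ℕ} (α : Fin d → ℕ) (f : EuclideanSpace ℝ (Fin d) → ℝ) :
    EuclideanSpace ℝ (Fin d) → ℝ :=
  (List.finRange d).foldr (fun i g => (pd1 i)^[α i] g) f


open MeasureTheory
open scoped ENNReal

/-- An `H^k`-type Sobolev sum of `L²` norms of derivatives up to order `k`. -/
noncomputable def sobNorm {d : ℕ} (k : ℕ) (g : EuclideanSpace ℝ (Fin d) → ℝ) : ℝ≥0∞ :=
  ∑ γ ∈ (Finset.Iic ((fun _ => k) : Fin d → ℕ)).filter (fun γ => msize γ ≤ k),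
    eLpNorm (pd γ g) 2 volume

variable {d : ℕ}

lemma contDiff_pd1 {g : EuclideanSpace ℝ (Fin d) → ℝ} (hg : ContDiff ℝ (⊤ : ℕ∞) g) (i : Fin d) :
    ContDiff ℝ (⊤ : ℕ∞) (pd1 i g) :=
  (hg.fderiv_right (by exact_mod_cast le_of_eq (top_add 1))).clm_apply contDiff_const

lemma contDiff_pd1_iter {g : EuclideanSpace ℝ (Fin d) → ℝ} (hg : ContDiff ℝ (⊤ : ℕ∞) g) (i : Fin d)
    (n : ℕ) : ContDiff ℝ (⊤ : ℕ∞) ((pd1 i)^[n] g) := by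
  induction n with
  | zero => exact hg
  | succ n ih => rw [Function.iterate_succ_apply']; exact contDiff_pd1 ih i

lemma contDiff_foldr {g : EuclideanSpace ℝ (Fin d) → ℝ} (hg : ContDiff ℝ (⊤ : ℕ∞) g)
    (α : Fin d → ℕ) (l : List (Fin d)) :
    ContDiff ℝ (⊤ : ℕ∞) (l.foldr (fun i h => (pd1 i)^[α i] h) g) := by
  induction l with
  | nil => exact hg
  | cons j l ih => exact contDiff_pd1_iter ih j (α j)

lemma contDiff_pd {g : EuclideanSpace ℝ (Fin d) → ℝ} (hg : ContDiff ℝ (⊤ : ℕ∞) g)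
    (α : Fin d → ℕ) : ContDiff ℝ (⊤ : ℕ∞) (pd α g) := contDiff_foldr hg α _

lemma pd1_comm {g : EuclideanSpace ℝ (Fin d) → ℝ} (hg : ContDiff ℝ (⊤ : ℕ∞) g) (i j : Fin d) :
    pd1 i (pd1 j g) = pd1 j (pd1 i g) := by
  funext x
  have hsymm : IsSymmSndFDerivAt ℝ g x :=
    hg.contDiffAt.isSymmSndFDerivAt (by rw [minSmoothness_of_isRCLikeNormedField]; exact WithTop.coe_le_coe.mpr le_top)
  have key : ∀ a b : Fin d, pd1 a (pd1 b g) x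
      = fderiv ℝ (fderiv ℝ g) x (EuclideanSpace.single a 1) (EuclideanSpace.single b 1) := by
    intro a b
    have hdiff : DifferentiableAt ℝ (fderiv ℝ g) x :=
      ((hg.fderiv_right (m := (⊤ : ℕ∞)) (by exact_mod_cast le_of_eq (top_add 1))).differentiable (by simp)).differentiableAt
    have : pd1 b g = fun y => (fderiv ℝ g y) (EuclideanSpace.single b 1) := rfl
    rw [pd1, this]
    rw [fderiv_clm_apply hdiff (differentiableAt_const _)]
    simp
  rw [key i j, key j i]
  exact hsymm _ _

lemma pd1_iter_comm {g : EuclideanSpace ℝ (Fin d) → ℝ} (hg : ContDiff ℝ (⊤ : ℕ∞) g) (i j : Fin d)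
    (n : ℕ) : pd1 i ((pd1 j)^[n] g) = (pd1 j)^[n] (pd1 i g) := by
  induction n generalizing g with
  | zero => rfl
  | succ n ih =>
    rw [Function.iterate_succ_apply, Function.iterate_succ_apply]
    rw [ih (contDiff_pd1 hg j), pd1_comm hg i j]

lemma foldr_congr {g : EuclideanSpace ℝ (Fin d) → ℝ} {α α' : Fin d → ℕ}
    (l : List (Fin d)) (h : ∀ m ∈ l, α m = α' m) :
    l.foldr (fun j h => (pd1 j)^[α j] h) g = l.foldr (fun j h => (pd1 j)^[α' j] h) g := by
  induction l with
  | nil => rfl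
  | cons m l ih =>
    simp only [List.foldr_cons]
    rw [h m (List.mem_cons_self), ih (fun p hp => h p (List.mem_cons_of_mem _ hp))]

lemma pd1_foldr {g : EuclideanSpace ℝ (Fin d) → ℝ} (hg : ContDiff ℝ (⊤ : ℕ∞) g)
    (α : Fin d → ℕ) (i : Fin d) (l : List (Fin d)) (hl : l.Nodup) (hi : i ∈ l) :
    pd1 i (l.foldr (fun j h => (pd1 j)^[α j] h) g)
      = l.foldr (fun j h => (pd1 j)^[Function.update α i (α i + 1) j] h) g := by
  induction l with
  | nil => simp at hi
  | cons j l ih =>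
    simp only [List.foldr_cons]
    rcases List.nodup_cons.1 hl with ⟨hjl, hl'⟩
    by_cases hij : i = j
    · subst hij
      rw [foldr_congr (α' := Function.update α i (α i + 1)) l (fun m hm => by
          have hmi : m ≠ i := by rintro rfl; exact hjl hm
          exact (Function.update_of_ne hmi _ _).symm), Function.update_self]
      exact (Function.iterate_succ_apply' (pd1 i) (α i) _).symm
    · have hi' : i ∈ l := by
        rcases List.mem_cons.1 hi with h | h
        · exact absurd h hij
        · exact h
      rw [pd1_iter_comm (contDiff_foldr hg α l) i j, ih hl' hi',
        Function.update_of_ne (Ne.symm hij)]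

lemma pd1_pd {f : EuclideanSpace ℝ (Fin d) → ℝ} (hf : ContDiff ℝ (⊤ : ℕ∞) f)
    (α : Fin d → ℕ) (i : Fin d) :
    pd1 i (pd α f) = pd (Function.update α i (α i + 1)) f :=
  pd1_foldr hf α i _ (List.nodup_finRange d) (List.mem_finRange i)

lemma mpow_hasFDerivAt (β : Fin d → ℕ) (x : EuclideanSpace ℝ (Fin d)) :
    HasFDerivAt (fun y : EuclideanSpace ℝ (Fin d) => mpow y β)
      (∑ j : Fin d, (∏ m ∈ Finset.univ.erase j, (x m) ^ (β m)) •
        (((β j : ℝ) * (x j) ^ (β j - 1)) • (EuclideanSpace.proj (𝕜 := ℝ) j))) x := by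
  have h : ∀ j ∈ Finset.univ, HasFDerivAt
      (fun y : EuclideanSpace ℝ (Fin d) => (EuclideanSpace.proj (𝕜 := ℝ) j y) ^ (β j))
      (((β j : ℝ) * (x j) ^ (β j - 1)) • (EuclideanSpace.proj (𝕜 := ℝ) j)) x := by
    intro j _
    have hd : HasDerivAt (fun t : ℝ => t ^ (β j)) ((β j : ℝ) * (x j) ^ (β j - 1))
        (EuclideanSpace.proj (𝕜 := ℝ) j x) := hasDerivAt_pow (β j) _
    exact hd.comp_hasFDerivAt x ((EuclideanSpace.proj (𝕜 := ℝ) j).hasFDerivAt)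
  exact HasFDerivAt.finset_prod h

lemma mpow_contDiff (β : Fin d → ℕ) :
    ContDiff ℝ (⊤ : ℕ∞) (fun y : EuclideanSpace ℝ (Fin d) => mpow y β) :=
  contDiff_prod (fun j _ => ((EuclideanSpace.proj (𝕜 := ℝ) j).contDiff).pow (β j))

lemma pd1_mpow (β : Fin d → ℕ) (i : Fin d) :
    pd1 i (fun y => mpow y β)
      = fun x => (β i : ℝ) * mpow x (Function.update β i (β i - 1)) := by
  funext x
  have h := mpow_hasFDerivAt (d := d) β x
  rw [pd1, h.fderiv]
  simp only [ContinuousLinearMap.coe_sum', Finset.sum_apply, ContinuousLinearMap.coe_smul',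
    Pi.smul_apply, smul_eq_mul]
  rw [Finset.sum_eq_single i]
  · have hproj : EuclideanSpace.proj (𝕜 := ℝ) i (EuclideanSpace.single i (1 : ℝ)) = 1 := by
      simp [EuclideanSpace.single_apply]
    rw [hproj]
    have hm : mpow x (Function.update β i (β i - 1))
        = (x i) ^ (β i - 1) * ∏ m ∈ Finset.univ.erase i, (x m) ^ (β m) := by
      rw [mpow, ← Finset.mul_prod_erase Finset.univ _ (Finset.mem_univ i),
        Function.update_self]
      congr 1
      exact Finset.prod_congr rfl fun m hm => by
        rw [Function.update_of_ne (Finset.ne_of_mem_erase hm)]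
    rw [hm]; ring
  · intro j _ hj
    have hproj : EuclideanSpace.proj (𝕜 := ℝ) j (EuclideanSpace.single i (1 : ℝ)) = 0 := by
      simp [EuclideanSpace.single_apply]
      intro h; exact absurd h hj
    rw [hproj]; ring
  · intro h; exact absurd (Finset.mem_univ i) h

noncomputable def FF {d : ℕ} (f : EuclideanSpace ℝ (Fin d) → ℝ) (α β : Fin d → ℕ) :
    EuclideanSpace ℝ (Fin d) → ℝ := fun x => mpow x β * pd α f x

lemma contDiff_FF {f : EuclideanSpace ℝ (Fin d) → ℝ} (hf : ContDiff ℝ (⊤ : ℕ∞) f)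
    (α β : Fin d → ℕ) : ContDiff ℝ (⊤ : ℕ∞) (FF f α β) :=
  (mpow_contDiff β).mul (contDiff_pd hf α)

lemma pd1_FF {f : EuclideanSpace ℝ (Fin d) → ℝ} (hf : ContDiff ℝ (⊤ : ℕ∞) f)
    (α β : Fin d → ℕ) (i : Fin d) :
    pd1 i (FF f α β) = fun x =>
      (β i : ℝ) * FF f α (Function.update β i (β i - 1)) x
        + FF f (Function.update α i (α i + 1)) β x := by
  funext x
  have hm : DifferentiableAt ℝ (fun y => mpow y β) x :=
    ((mpow_contDiff β).differentiable (by simp)) x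
  have hg : DifferentiableAt ℝ (pd α f) x :=
    ((contDiff_pd hf α).differentiable (by simp)) x
  rw [show pd1 i (FF f α β) x
      = fderiv ℝ (fun y => mpow y β * pd α f y) x (EuclideanSpace.single i 1) from rfl,
    fderiv_fun_mul hm hg]
  simp only [ContinuousLinearMap.add_apply, ContinuousLinearMap.coe_smul', Pi.smul_apply,
    smul_eq_mul]
  have h1 : fderiv ℝ (fun y => mpow y β) x (EuclideanSpace.single i 1)
      = (β i : ℝ) * mpow x (Function.update β i (β i - 1)) := by
    have := congrFun (pd1_mpow β i) x
    exact this
  have h2 : fderiv ℝ (pd α f) x (EuclideanSpace.single i 1)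
      = pd (Function.update α i (α i + 1)) f x := by
    have := congrFun (pd1_pd hf α i) x
    exact this
  rw [h1, h2]
  simp only [FF]
  ring

noncomputable def evalL {d : ℕ} (f : EuclideanSpace ℝ (Fin d) → ℝ)
    (L : List (ℝ × (Fin d → ℕ) × (Fin d → ℕ))) : EuclideanSpace ℝ (Fin d) → ℝ :=
  fun x => (L.map (fun t => t.1 * FF f t.2.1 t.2.2 x)).sum

def stepL {d : ℕ} (i : Fin d) (L : List (ℝ × (Fin d → ℕ) × (Fin d → ℕ))) :
    List (ℝ × (Fin d → ℕ) × (Fin d → ℕ)) :=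
  L.flatMap (fun t => [(t.1 * (t.2.2 i : ℝ), t.2.1, Function.update t.2.2 i (t.2.2 i - 1)),
    (t.1, Function.update t.2.1 i (t.2.1 i + 1), t.2.2)])

lemma contDiff_evalL {f : EuclideanSpace ℝ (Fin d) → ℝ} (hf : ContDiff ℝ (⊤ : ℕ∞) f)
    (L : List (ℝ × (Fin d → ℕ) × (Fin d → ℕ))) : ContDiff ℝ (⊤ : ℕ∞) (evalL f L) := by
  induction L with
  | nil => show ContDiff ℝ (⊤ : ℕ∞) (fun _ => (0:ℝ)); exact contDiff_const
  | cons t L ih =>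
    have : evalL f (t :: L) = fun x => t.1 * FF f t.2.1 t.2.2 x + evalL f L x := rfl
    rw [this]
    exact (contDiff_const.mul (contDiff_FF hf t.2.1 t.2.2)).add ih

lemma pd1_evalL {f : EuclideanSpace ℝ (Fin d) → ℝ} (hf : ContDiff ℝ (⊤ : ℕ∞) f)
    (i : Fin d) (L : List (ℝ × (Fin d → ℕ) × (Fin d → ℕ))) :
    pd1 i (evalL f L) = evalL f (stepL i L) := by
  induction L with
  | nil =>
    funext x
    show fderiv ℝ (evalL f []) x (EuclideanSpace.single i 1) = 0
    have : evalL f ([] : List (ℝ × (Fin d → ℕ) × (Fin d → ℕ))) = fun _ => (0:ℝ) := rfl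
    rw [this, fderiv_fun_const]
    simp
  | cons t L ih =>
    funext x
    have hsplit : evalL f (t :: L) = fun x => t.1 * FF f t.2.1 t.2.2 x + evalL f L x := rfl
    have hd1 : DifferentiableAt ℝ (fun x => t.1 * FF f t.2.1 t.2.2 x) x :=
      ((contDiff_const.mul (contDiff_FF hf t.2.1 t.2.2)).differentiable (by simp)) x
    have hd2 : DifferentiableAt ℝ (evalL f L) x :=
      ((contDiff_evalL hf L).differentiable (by simp)) x
    have : pd1 i (evalL f (t :: L)) x
        = pd1 i (fun x => t.1 * FF f t.2.1 t.2.2 x) x + pd1 i (evalL f L) x := by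
      rw [hsplit, pd1, fderiv_fun_add hd1 hd2]
      rfl
    rw [this, ih]
    have hc : pd1 i (fun x => t.1 * FF f t.2.1 t.2.2 x) x
        = t.1 * pd1 i (FF f t.2.1 t.2.2) x := by
      rw [pd1, fderiv_const_mul (((contDiff_FF hf t.2.1 t.2.2).differentiable (by simp)) x)]
      rfl
    rw [hc, pd1_FF hf t.2.1 t.2.2 i]
    show t.1 * ((t.2.2 i : ℝ) * FF f t.2.1 (Function.update t.2.2 i (t.2.2 i - 1)) x
        + FF f (Function.update t.2.1 i (t.2.1 i + 1)) t.2.2 x) + evalL f (stepL i L) x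
      = evalL f (stepL i (t :: L)) x
    have hstep : stepL i (t :: L)
        = (t.1 * (t.2.2 i : ℝ), t.2.1, Function.update t.2.2 i (t.2.2 i - 1))
          :: (t.1, Function.update t.2.1 i (t.2.1 i + 1), t.2.2) :: stepL i L := rfl
    rw [hstep]
    show _ = (t.1 * (t.2.2 i : ℝ)) * FF f t.2.1 (Function.update t.2.2 i (t.2.2 i - 1)) x
        + ((t.1 * FF f (Function.update t.2.1 i (t.2.1 i + 1)) t.2.2 x) + evalL f (stepL i L) x)
    ring

lemma pd1_iter_evalL {f : EuclideanSpace ℝ (Fin d) → ℝ} (hf : ContDiff ℝ (⊤ : ℕ∞) f)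
    (i : Fin d) (n : ℕ) (L : List (ℝ × (Fin d → ℕ) × (Fin d → ℕ))) :
    (pd1 i)^[n] (evalL f L) = evalL f ((stepL i)^[n] L) := by
  induction n generalizing L with
  | zero => rfl
  | succ n ih =>
    rw [Function.iterate_succ_apply, Function.iterate_succ_apply, pd1_evalL hf, ih]

lemma pd_evalL {f : EuclideanSpace ℝ (Fin d) → ℝ} (hf : ContDiff ℝ (⊤ : ℕ∞) f)
    (γ : Fin d → ℕ) (l : List (Fin d)) (L : List (ℝ × (Fin d → ℕ) × (Fin d → ℕ))) :
    l.foldr (fun i g => (pd1 i)^[γ i] g) (evalL f L)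
      = evalL f (l.foldr (fun i L => (stepL i)^[γ i] L) L) := by
  induction l generalizing L with
  | nil => rfl
  | cons j l ih =>
    simp only [List.foldr_cons]
    rw [ih, pd1_iter_evalL hf]

lemma FF_eq_evalL (f : EuclideanSpace ℝ (Fin d) → ℝ) (α β : Fin d → ℕ) :
    FF f α β = evalL f [(1, α, β)] := by
  funext x
  simp [evalL]

lemma pd_FF_eq {f : EuclideanSpace ℝ (Fin d) → ℝ} (hf : ContDiff ℝ (⊤ : ℕ∞) f)
    (γ α β : Fin d → ℕ) :
    pd γ (FF f α β) = evalL f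
      ((List.finRange d).foldr (fun i L => (stepL i)^[γ i] L) [(1, α, β)]) := by
  rw [pd, FF_eq_evalL, pd_evalL hf]

def csum {d : ℕ} (L : List (ℝ × (Fin d → ℕ) × (Fin d → ℕ))) : ℝ :=
  (L.map (fun t => |t.1|)).sum

def InvL {d : ℕ} (α β : Fin d → ℕ) (j : ℕ) (L : List (ℝ × (Fin d → ℕ) × (Fin d → ℕ))) : Prop :=
  csum L ≤ (((msize β : ℝ) + 1) * 2) ^ j ∧
    ∀ t ∈ L, msize t.2.1 ≤ msize α + j ∧ t.2.2 ≤ β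

lemma msize_mono {β' β : Fin d → ℕ} (h : β' ≤ β) : msize β' ≤ msize β :=
  Finset.sum_le_sum fun i _ => h i

lemma csum_nonneg (L : List (ℝ × (Fin d → ℕ) × (Fin d → ℕ))) : 0 ≤ csum L := by
  induction L with
  | nil => simp [csum]
  | cons t L ih =>
    have : csum (t :: L) = |t.1| + csum L := by simp [csum]
    rw [this]
    positivity

lemma stepL_invL {α β : Fin d → ℕ} {j : ℕ} {L : List (ℝ × (Fin d → ℕ) × (Fin d → ℕ))}
    (i : Fin d) (h : InvL α β j L) : InvL α β (j + 1) (stepL i L) := by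
  obtain ⟨hsum, hmem⟩ := h
  constructor
  · have key : ∀ L' : List (ℝ × (Fin d → ℕ) × (Fin d → ℕ)),
        (∀ t ∈ L', t.2.2 ≤ β) → csum (stepL i L') ≤ ((msize β : ℝ) + 1) * csum L' := by
      intro L' hL'
      induction L' with
      | nil => simp [csum, stepL]
      | cons t L' ih =>
        have h1 : csum (stepL i (t :: L')) = |t.1 * (t.2.2 i : ℝ)| + (|t.1| + csum (stepL i L')) := by
          simp [csum, stepL]
        have h2 : csum (t :: L') = |t.1| + csum L' := by simp [csum]
        rw [h1, h2]
        have hb : (t.2.2 i : ℝ) ≤ (msize β : ℝ) := by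
          have h3 : t.2.2 i ≤ β i := hL' t (List.mem_cons_self) i
          have h4 : β i ≤ msize β := Finset.single_le_sum (f := β) (fun _ _ => Nat.zero_le _)
            (Finset.mem_univ i)
          exact_mod_cast le_trans h3 h4
        have := ih (fun p hp => hL' p (List.mem_cons_of_mem _ hp))
        have habs : |t.1 * (t.2.2 i : ℝ)| ≤ |t.1| * (msize β : ℝ) := by
          rw [abs_mul, abs_of_nonneg (by positivity : (0:ℝ) ≤ (t.2.2 i : ℝ))]
          exact mul_le_mul_of_nonneg_left hb (abs_nonneg _)
        nlinarith [abs_nonneg t.1, csum_nonneg (stepL i L')]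
    calc csum (stepL i L) ≤ ((msize β : ℝ) + 1) * csum L := key L fun t ht => (hmem t ht).2
      _ ≤ ((msize β : ℝ) + 1) * (((msize β : ℝ) + 1) * 2) ^ j := by
          apply mul_le_mul_of_nonneg_left hsum
          positivity
      _ ≤ (((msize β : ℝ) + 1) * 2) ^ (j + 1) := by
          rw [pow_succ]
          have h1 : (0:ℝ) ≤ ((msize β : ℝ) + 1) * 2 := by positivity
          have h2 : ((msize β : ℝ) + 1) ≤ ((msize β : ℝ) + 1) * 2 := by nlinarith [Nat.cast_nonneg (α := ℝ) (msize β)]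
          calc ((msize β : ℝ) + 1) * (((msize β : ℝ) + 1) * 2) ^ j
              = (((msize β : ℝ) + 1) * 2) ^ j * ((msize β : ℝ) + 1) := by ring
            _ ≤ (((msize β : ℝ) + 1) * 2) ^ j * (((msize β : ℝ) + 1) * 2) :=
                mul_le_mul_of_nonneg_left h2 (by positivity)
  · intro t ht
    simp only [stepL, List.mem_flatMap] at ht
    obtain ⟨s, hs, hts⟩ := ht
    obtain ⟨h1, h2⟩ := hmem s hs
    simp only [List.mem_cons, List.mem_singleton] at hts
    rcases hts with rfl | hts
    · refine ⟨le_trans h1 (by omega), ?_⟩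
      intro m
      show Function.update s.2.2 i (s.2.2 i - 1) m ≤ β m
      by_cases hm : m = i
      · subst hm; rw [Function.update_self]; exact le_trans (Nat.sub_le _ _) (h2 m)
      · rw [Function.update_of_ne hm]; exact h2 m
    · rcases hts with rfl | h
      · refine ⟨?_, h2⟩
        show msize (Function.update s.2.1 i (s.2.1 i + 1)) ≤ msize α + (j + 1)
        have : msize (Function.update s.2.1 i (s.2.1 i + 1)) = msize s.2.1 + 1 := by
          simp only [msize]
          rw [Finset.sum_update_of_mem (Finset.mem_univ i),
            Finset.sum_eq_sum_sdiff_singleton_add (Finset.mem_univ i) s.2.1]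
          omega
        omega
      · exact absurd h List.not_mem_nil

lemma iter_invL {α β : Fin d → ℕ} {j : ℕ} {L : List (ℝ × (Fin d → ℕ) × (Fin d → ℕ))}
    (i : Fin d) (n : ℕ) (h : InvL α β j L) : InvL α β (j + n) ((stepL i)^[n] L) := by
  induction n with
  | zero => exact h
  | succ n ih =>
    rw [Function.iterate_succ_apply']
    have := stepL_invL i ih
    rwa [show j + n + 1 = j + (n + 1) by omega] at this

lemma foldr_invL {α β : Fin d → ℕ} {j : ℕ} {L : List (ℝ × (Fin d → ℕ) × (Fin d → ℕ))}
    (γ : Fin d → ℕ) (l : List (Fin d)) (h : InvL α β j L) :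
    InvL α β (j + (l.map γ).sum) (l.foldr (fun i L => (stepL i)^[γ i] L) L) := by
  induction l generalizing j L with
  | nil => simpa using h
  | cons i l ih =>
    simp only [List.foldr_cons, List.map_cons, List.sum_cons]
    have := iter_invL i (γ i) (ih h)
    rwa [show j + (l.map γ).sum + γ i = j + (γ i + (l.map γ).sum) by omega] at this

lemma pd_FF_invL (α β γ : Fin d → ℕ) :
    InvL α β (msize γ)
      ((List.finRange d).foldr (fun i L => (stepL i)^[γ i] L) [(1, α, β)]) := by
  have hbase : InvL α β 0 [(1, α, β)] := by
    refine ⟨?_, ?_⟩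
    · simp [csum]
    · intro t ht
      simp only [List.mem_singleton] at ht
      subst ht
      exact ⟨le_rfl, le_refl β⟩
  have := foldr_invL γ (List.finRange d) hbase
  have hms : ((List.finRange d).map γ).sum = msize γ := by
    rw [msize, Fin.sum_univ_def]
  rwa [hms, zero_add] at this

lemma mpow_add (x : EuclideanSpace ℝ (Fin d)) (a b : Fin d → ℕ) :
    mpow x (a + b) = mpow x a * mpow x b := by
  simp [mpow, pow_add, Finset.prod_mul_distrib]

lemma msize_add (a b : Fin d → ℕ) : msize (a + b) = msize a + msize b := by
  simp [msize, Finset.sum_add_distrib]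

lemma evalL_abs_le {f : EuclideanSpace ℝ (Fin d) → ℝ} {w : Fin d → ℕ}
    (L : List (ℝ × (Fin d → ℕ) × (Fin d → ℕ))) (x : EuclideanSpace ℝ (Fin d)) (M : ℝ)
    (hM : 0 ≤ M) (h : ∀ t ∈ L, |mpow x w * FF f t.2.1 t.2.2 x| ≤ M) :
    |mpow x w * evalL f L x| ≤ csum L * M := by
  induction L with
  | nil => simp [evalL, csum]
  | cons t L ih =>
    have hsplit : mpow x w * evalL f (t :: L) x
        = t.1 * (mpow x w * FF f t.2.1 t.2.2 x) + mpow x w * evalL f L x := by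
      show mpow x w * (t.1 * FF f t.2.1 t.2.2 x + evalL f L x) = _
      ring
    rw [hsplit]
    have h1 := h t (List.mem_cons_self)
    have h2 := ih (fun p hp => h p (List.mem_cons_of_mem _ hp))
    have hc : csum (t :: L) = |t.1| + csum L := by simp [csum]
    rw [hc]
    calc |t.1 * (mpow x w * FF f t.2.1 t.2.2 x) + mpow x w * evalL f L x|
        ≤ |t.1| * |mpow x w * FF f t.2.1 t.2.2 x| + |mpow x w * evalL f L x| := by
          rw [← abs_mul]; exact abs_add_le _ _
      _ ≤ |t.1| * M + csum L * M := by
          have := abs_nonneg t.1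
          gcongr
      _ = (|t.1| + csum L) * M := by ring

section Master

variable {f : EuclideanSpace ℝ (Fin d) → ℝ} {C : ℝ}

lemma master_ptwise (hf : ContDiff ℝ (⊤ : ℕ∞) f) (hC : 0 < C)
    (hbound : ∀ (x : EuclideanSpace ℝ (Fin d)) (α β : Fin d → ℕ),
      |mpow x β * pd α f x|
        ≤ C ^ (msize α + msize β + 1) * (Nat.factorial (max (msize α) (msize β)) : ℝ))
    (γ α β w : Fin d → ℕ) (x : EuclideanSpace ℝ (Fin d)) :
    |mpow x w * pd γ (FF f α β) x|
      ≤ (((msize β : ℝ) + 1) * 2) ^ (msize γ)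
        * (max C 1) ^ (msize α + msize β + msize γ + msize w + 1)
        * (Nat.factorial (max (msize α) (msize β) + msize γ + msize w) : ℝ) := by
  set C₁ := max C 1 with hC₁
  have hC₁1 : (1:ℝ) ≤ C₁ := le_max_right _ _
  rw [pd_FF_eq hf]
  obtain ⟨hsum, hmem⟩ := pd_FF_invL α β γ
  set L := (List.finRange d).foldr (fun i L => (stepL i)^[γ i] L) [(1, α, β)] with hL
  set M : ℝ := C₁ ^ (msize α + msize β + msize γ + msize w + 1)
        * (Nat.factorial (max (msize α) (msize β) + msize γ + msize w) : ℝ) with hM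
  have hM0 : 0 ≤ M := by positivity
  have hterm : ∀ t ∈ L, |mpow x w * FF f t.2.1 t.2.2 x| ≤ M := by
    intro t ht
    obtain ⟨ha, hb⟩ := hmem t ht
    have heq : mpow x w * FF f t.2.1 t.2.2 x = mpow x (w + t.2.2) * pd t.2.1 f x := by
      rw [mpow_add]; show _ = mpow x w * mpow x t.2.2 * pd t.2.1 f x
      rw [FF]; ring
    rw [heq]
    have hb1 : msize t.2.2 ≤ msize β := msize_mono hb
    have key := hbound x t.2.1 (w + t.2.2)
    have hle1 : msize t.2.1 + msize (w + t.2.2) + 1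
        ≤ msize α + msize β + msize γ + msize w + 1 := by
      rw [msize_add]; omega
    have hle2 : max (msize t.2.1) (msize (w + t.2.2))
        ≤ max (msize α) (msize β) + msize γ + msize w := by
      rw [msize_add]
      have h1 : msize α ≤ max (msize α) (msize β) := le_max_left _ _
      have h2 : msize β ≤ max (msize α) (msize β) := le_max_right _ _
      omega
    calc |mpow x (w + t.2.2) * pd t.2.1 f x|
        ≤ C ^ (msize t.2.1 + msize (w + t.2.2) + 1)
          * (Nat.factorial (max (msize t.2.1) (msize (w + t.2.2))) : ℝ) := key
      _ ≤ M := by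
          rw [hM]
          apply mul_le_mul
          · calc C ^ (msize t.2.1 + msize (w + t.2.2) + 1)
                ≤ C₁ ^ (msize t.2.1 + msize (w + t.2.2) + 1) := by
                  apply pow_le_pow_left₀ hC.le (le_max_left _ _)
              _ ≤ C₁ ^ (msize α + msize β + msize γ + msize w + 1) :=
                  pow_le_pow_right₀ hC₁1 hle1
          · exact_mod_cast Nat.factorial_le (le_trans hle2 (le_refl _))
          · positivity
          · positivity
  calc |mpow x w * evalL f L x| ≤ csum L * M := evalL_abs_le L x M hM0 hterm
    _ ≤ (((msize β : ℝ) + 1) * 2) ^ (msize γ) * M :=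
        mul_le_mul_of_nonneg_right hsum hM0
    _ = _ := by rw [hM]; ring

end Master

lemma mpow_pisingle (x : EuclideanSpace ℝ (Fin d)) (i : Fin d) (W : ℕ) :
    mpow x (Pi.single i W) = (x i) ^ W := by
  rw [mpow]
  rw [Finset.prod_eq_single i]
  · rw [Pi.single_eq_same]
  · intro j _ hj
    rw [Pi.single_eq_of_ne hj, pow_zero]
  · intro h; exact absurd (Finset.mem_univ i) h

lemma msize_pisingle (i : Fin d) (W : ℕ) : msize (Pi.single i W : Fin d → ℕ) = W := by
  rw [msize, Finset.sum_eq_single i]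
  · rw [Pi.single_eq_same]
  · intro j _ hj; rw [Pi.single_eq_of_ne hj]
  · intro h; exact absurd (Finset.mem_univ i) h

lemma decay_bound (h : EuclideanSpace ℝ (Fin d) → ℝ) (T : ℝ) (hT : 0 ≤ T)
    (h0 : ∀ x, |h x| ≤ T)
    (hi : ∀ (i : Fin d) (x : EuclideanSpace ℝ (Fin d)), |x i| ^ (2 * (d + 1)) * |h x| ≤ T)
    (x : EuclideanSpace ℝ (Fin d)) :
    |h x| ≤ T * ((4 * (d:ℝ) + 4) ^ (d + 1)) * ((1 + ‖x‖)⁻¹) ^ (2 * (d + 1)) := by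
  have hx0 : (0:ℝ) < 1 + ‖x‖ := by positivity
  rcases le_or_gt ‖x‖ 1 with hx | hx
  · have h2 : (1 + ‖x‖) ^ (2 * (d + 1)) ≤ (2:ℝ) ^ (2 * (d + 1)) := by
      apply pow_le_pow_left₀ (by positivity)
      linarith
    have key : |h x| * (1 + ‖x‖) ^ (2 * (d + 1)) ≤ T * (2:ℝ) ^ (2 * (d + 1)) := by
      apply mul_le_mul (h0 x) h2 (by positivity) hT
    have h4 : (2:ℝ) ^ (2 * (d + 1)) = 4 ^ (d + 1) := by
      rw [show (4:ℝ) = 2^2 by norm_num, ← pow_mul]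
    have h5 : (4:ℝ) ^ (d+1) ≤ (4 * (d:ℝ) + 4) ^ (d + 1) := by
      apply pow_le_pow_left₀ (by norm_num)
      have : (0:ℝ) ≤ (d:ℝ) := Nat.cast_nonneg d
      linarith
    rw [inv_pow, ← div_eq_mul_inv, le_div_iff₀ (by positivity)]
    calc |h x| * (1 + ‖x‖) ^ (2 * (d + 1)) ≤ T * (2:ℝ) ^ (2 * (d + 1)) := key
      _ ≤ T * ((4 * (d:ℝ) + 4) ^ (d + 1)) := by
          rw [h4]; exact mul_le_mul_of_nonneg_left h5 hT
  · -- ‖x‖ > 1, so x ≠ 0 and d ≥ 1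
    have hd : 0 < d := by
      by_contra hd
      push_neg at hd
      interval_cases d
      have : x = 0 := Subsingleton.elim x 0
      rw [this, norm_zero] at hx
      linarith
    obtain ⟨i, _, hmax⟩ := Finset.exists_max_image Finset.univ (fun j => |x j|)
      ⟨⟨0, hd⟩, Finset.mem_univ _⟩
    have hnorm : ‖x‖ ^ 2 ≤ (d : ℝ) * (x i) ^ 2 := by
      have hne : ‖x‖ = Real.sqrt (∑ j, ‖x j‖ ^ 2) := EuclideanSpace.norm_eq x
      have : ‖x‖ ^ 2 = ∑ j, ‖x j‖ ^ 2 := by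
        rw [hne, Real.sq_sqrt]
        positivity
      rw [this]
      calc ∑ j, ‖x j‖ ^ 2 ≤ ∑ _j : Fin d, (x i) ^ 2 := by
            apply Finset.sum_le_sum
            intro j _
            rw [Real.norm_eq_abs, ← sq_abs (x i)]
            apply pow_le_pow_left₀ (abs_nonneg _) (hmax j (Finset.mem_univ j))
        _ = (d : ℝ) * (x i) ^ 2 := by
            rw [Finset.sum_const, Finset.card_univ, Fintype.card_fin, nsmul_eq_mul]
    have hpow : (1 + ‖x‖) ^ (2 * (d + 1)) ≤ (4 * (d:ℝ) + 4) ^ (d + 1) * |x i| ^ (2 * (d + 1)) := by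
      have h1 : (1 + ‖x‖) ≤ 2 * ‖x‖ := by linarith
      have h2 : (1 + ‖x‖) ^ (2 * (d + 1)) ≤ (2 * ‖x‖) ^ (2 * (d + 1)) :=
        pow_le_pow_left₀ (by positivity) h1 _
      have h3 : (2 * ‖x‖) ^ (2 * (d + 1)) = 4 ^ (d+1) * (‖x‖ ^ 2) ^ (d + 1) := by
        rw [show (4:ℝ) = 2^2 by norm_num]
        rw [mul_pow, ← pow_mul, ← pow_mul]
      have h4 : (‖x‖ ^ 2) ^ (d + 1) ≤ ((d:ℝ) * (x i) ^ 2) ^ (d + 1) := by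
        apply pow_le_pow_left₀ (by positivity) hnorm
      have h5 : ((d:ℝ) * (x i) ^ 2) ^ (d+1) = (d:ℝ)^(d+1) * |x i| ^ (2 * (d+1)) := by
        rw [mul_pow, ← sq_abs (x i), ← pow_mul]
      have h6 : (4:ℝ) ^ (d+1) * ((d:ℝ)^(d+1) * |x i| ^ (2*(d+1)))
          = (4 * (d:ℝ)) ^ (d+1) * |x i| ^ (2*(d+1)) := by
        rw [mul_pow]; ring
      have h7 : (4 * (d:ℝ)) ^ (d+1) ≤ (4 * (d:ℝ) + 4) ^ (d+1) := by
        apply pow_le_pow_left₀ (by positivity)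
        linarith
      calc (1 + ‖x‖) ^ (2 * (d + 1)) ≤ (2 * ‖x‖) ^ (2 * (d + 1)) := h2
        _ = 4 ^ (d+1) * (‖x‖ ^ 2) ^ (d + 1) := h3
        _ ≤ 4 ^ (d+1) * ((d:ℝ) * (x i) ^ 2) ^ (d + 1) := by
            apply mul_le_mul_of_nonneg_left h4 (by positivity)
        _ = (4 * (d:ℝ)) ^ (d+1) * |x i| ^ (2*(d+1)) := by rw [h5, h6]
        _ ≤ (4 * (d:ℝ) + 4) ^ (d+1) * |x i| ^ (2*(d+1)) := by
            apply mul_le_mul_of_nonneg_right h7 (by positivity)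
    rw [inv_pow, ← div_eq_mul_inv, le_div_iff₀ (by positivity)]
    calc |h x| * (1 + ‖x‖) ^ (2 * (d + 1))
        ≤ |h x| * ((4 * (d:ℝ) + 4) ^ (d + 1) * |x i| ^ (2 * (d + 1))) := by
          apply mul_le_mul_of_nonneg_left hpow (abs_nonneg _)
      _ = (4 * (d:ℝ) + 4) ^ (d + 1) * (|x i| ^ (2 * (d + 1)) * |h x|) := by ring
      _ ≤ (4 * (d:ℝ) + 4) ^ (d + 1) * T := by
          apply mul_le_mul_of_nonneg_left (hi i x) (by positivity)
      _ = T * (4 * (d:ℝ) + 4) ^ (d + 1) := by ring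

noncomputable def phiW (d : ℕ) : EuclideanSpace ℝ (Fin d) → ℝ :=
  fun x => ((1 + ‖x‖)⁻¹) ^ (2 * (d + 1))

lemma phiW_nonneg (d : ℕ) (x : EuclideanSpace ℝ (Fin d)) : 0 ≤ phiW d x := by
  rw [phiW]; positivity

lemma phiW_memLp (d : ℕ) : MemLp (phiW d) 2 (volume : Measure (EuclideanSpace ℝ (Fin d))) := by
  have hcont : Continuous (phiW d) := by
    apply Continuous.pow
    apply Continuous.inv₀
    · exact continuous_const.add continuous_norm
    · intro x; positivity
  rw [memLp_two_iff_integrable_sq hcont.aestronglyMeasurable]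
  have hr : (Module.finrank ℝ (EuclideanSpace ℝ (Fin d)) : ℝ) < ((4 * (d + 1) : ℕ) : ℝ) := by
    rw [finrank_euclideanSpace_fin]
    push_cast
    linarith [Nat.cast_nonneg (α := ℝ) d]
  have hint := integrable_one_add_norm (E := EuclideanSpace ℝ (Fin d)) (μ := volume) hr
  apply hint.congr
  apply Filter.Eventually.of_forall
  intro x
  have h1 : (0:ℝ) < 1 + ‖x‖ := by positivity
  show (1 + ‖x‖) ^ (-((4 * (d + 1) : ℕ) : ℝ)) = phiW d x ^ 2
  rw [Real.rpow_neg h1.le, Real.rpow_natCast]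
  rw [phiW, ← pow_mul, inv_pow]
  congr 1
  ring

lemma eLpNorm_le_of_decay {h : EuclideanSpace ℝ (Fin d) → ℝ} {c : ℝ} (hc : 0 ≤ c)
    (hb : ∀ x, |h x| ≤ c * phiW d x) :
    eLpNorm h 2 volume ≤ ENNReal.ofReal c * eLpNorm (phiW d) 2 volume := by
  have hmono : eLpNorm h 2 volume ≤ eLpNorm (c • phiW d) 2 volume := by
    apply eLpNorm_mono
    intro x
    rw [Pi.smul_apply, smul_eq_mul, Real.norm_eq_abs, Real.norm_eq_abs, abs_mul,
      abs_of_nonneg hc, abs_of_nonneg (phiW_nonneg d x)]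
    exact hb x
  rw [eLpNorm_const_smul] at hmono
  refine le_trans hmono ?_
  apply mul_le_mul_left
  rw [← ofReal_norm, Real.norm_eq_abs, abs_of_nonneg hc]

lemma fact_ratio (M Q : ℕ) : (M + Q).factorial ≤ M.factorial * (M + Q) ^ Q := by
  induction Q with
  | zero => simp
  | succ Q ih =>
    rw [show M + (Q+1) = (M + Q) + 1 by omega, Nat.factorial_succ]
    calc (M + Q + 1) * (M + Q).factorial ≤ (M + Q + 1) * (M.factorial * (M + Q) ^ Q) :=
          Nat.mul_le_mul_left _ ih
      _ ≤ (M + Q + 1) * (M.factorial * (M + Q + 1) ^ Q) := by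
          apply Nat.mul_le_mul_left
          apply Nat.mul_le_mul_left
          exact Nat.pow_le_pow_left (by omega) Q
      _ = M.factorial * (M + Q + 1) ^ (Q + 1) := by ring

lemma tsum_geo_multi (d : ℕ) (r : ℝ≥0∞) (hr : r < 1) :
    (∑' α : Fin d → ℕ, r ^ msize α) < ⊤ := by
  induction d with
  | zero =>
    have : (∑' α : Fin 0 → ℕ, r ^ msize α) = r ^ msize (fun i : Fin 0 => (0:ℕ)) := by
      apply tsum_eq_single
      intro b hb
      exact absurd (Subsingleton.elim b _) hb
    rw [this]
    have : msize (fun i : Fin 0 => (0:ℕ)) = 0 := by simp [msize]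
    rw [this, pow_zero]
    exact ENNReal.one_lt_top
  | succ d ih =>
    have heq := (Fin.consEquiv (fun _ : Fin (d+1) => ℕ)).tsum_eq
      (f := fun α : Fin (d+1) → ℕ => r ^ msize α)
    rw [← heq]
    have hterm : ∀ p : ℕ × (Fin d → ℕ),
        r ^ msize ((Fin.consEquiv (fun _ : Fin (d+1) => ℕ)) p) = r ^ p.1 * r ^ msize p.2 := by
      intro p
      have hc : msize ((Fin.consEquiv (fun _ : Fin (d+1) => ℕ)) p) = p.1 + msize p.2 := by
        show msize (Fin.cons p.1 p.2) = _
        rw [msize, Fin.sum_univ_succ]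
        simp [msize]
      rw [hc, pow_add]
    rw [tsum_congr hterm, ENNReal.tsum_prod']
    have : ∀ n : ℕ, (∑' β : Fin d → ℕ, r ^ n * r ^ msize β) = r ^ n * ∑' β : Fin d → ℕ, r ^ msize β :=
      fun n => ENNReal.tsum_mul_left
    rw [tsum_congr this, ENNReal.tsum_mul_right]
    apply ENNReal.mul_lt_top
    · rw [ENNReal.tsum_geometric]
      rw [ENNReal.inv_lt_top]
      exact tsub_pos_iff_lt.mpr hr
    · exact ih

lemma mpow_zero' (x : EuclideanSpace ℝ (Fin d)) : mpow x (0 : Fin d → ℕ) = 1 := by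
  simp [mpow]

lemma msize_zero' : msize (0 : Fin d → ℕ) = 0 := by simp [msize]

section L2

variable {f : EuclideanSpace ℝ (Fin d) → ℝ} {C : ℝ}

/-- The uniform bound for `sobNorm` terms. -/
noncomputable def Tb (C₁ : ℝ) (k : ℕ) {d : ℕ} (α β : Fin d → ℕ) : ℝ :=
  (((msize β : ℝ) + 1) * 2) ^ k * C₁ ^ (msize α + msize β + (k + 2 * (d + 1)) + 1)
    * ((max (msize α) (msize β) + (k + 2 * (d + 1))).factorial : ℝ)

lemma Tb_nonneg {C₁ : ℝ} (hC₁ : 1 ≤ C₁) (k : ℕ) (α β : Fin d → ℕ) : 0 ≤ Tb C₁ k α β := by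
  rw [Tb]
  have : (0:ℝ) < C₁ := lt_of_lt_of_le one_pos hC₁
  positivity

lemma master_le_Tb {C₁ : ℝ} (hC₁ : 1 ≤ C₁) {k : ℕ} {γ α β w : Fin d → ℕ}
    (hγ : msize γ ≤ k) (hw : msize w ≤ 2 * (d + 1)) :
    (((msize β : ℝ) + 1) * 2) ^ (msize γ)
        * C₁ ^ (msize α + msize β + msize γ + msize w + 1)
        * (Nat.factorial (max (msize α) (msize β) + msize γ + msize w) : ℝ)
      ≤ Tb C₁ k α β := by
  rw [Tb]
  have h1 : (1:ℝ) ≤ ((msize β : ℝ) + 1) * 2 := by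
    have : (0:ℝ) ≤ (msize β : ℝ) := Nat.cast_nonneg _
    linarith
  apply mul_le_mul
  · apply mul_le_mul
    · exact pow_le_pow_right₀ h1 hγ
    · apply pow_le_pow_right₀ hC₁
      omega
    · positivity
    · positivity
  · exact_mod_cast Nat.factorial_le (by omega)
  · positivity
  · have h0 : (0:ℝ) < C₁ := lt_of_lt_of_le one_pos hC₁
    positivity

lemma master_L2 (hf : ContDiff ℝ (⊤ : ℕ∞) f) (hC : 0 < C)
    (hbound : ∀ (x : EuclideanSpace ℝ (Fin d)) (α β : Fin d → ℕ),
      |mpow x β * pd α f x|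
        ≤ C ^ (msize α + msize β + 1) * (Nat.factorial (max (msize α) (msize β)) : ℝ))
    (k : ℕ) {γ : Fin d → ℕ} (hγ : msize γ ≤ k) (α β : Fin d → ℕ) :
    eLpNorm (pd γ (FF f α β)) 2 volume
      ≤ ENNReal.ofReal (Tb (max C 1) k α β * (4 * (d:ℝ) + 4) ^ (d + 1))
          * eLpNorm (phiW d) 2 volume := by
  have hC₁ : (1:ℝ) ≤ max C 1 := le_max_right _ _
  have hTb := Tb_nonneg (d := d) hC₁ k α β
  apply eLpNorm_le_of_decay (by positivity)
  intro x
  have key := decay_bound (pd γ (FF f α β)) (Tb (max C 1) k α β) hTb ?_ ?_ x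
  · calc |pd γ (FF f α β) x|
        ≤ Tb (max C 1) k α β * (4 * (d:ℝ) + 4) ^ (d + 1) * ((1 + ‖x‖)⁻¹) ^ (2 * (d + 1)) := key
      _ = Tb (max C 1) k α β * (4 * (d:ℝ) + 4) ^ (d + 1) * phiW d x := by rw [phiW]
  · intro y
    have := master_ptwise hf hC hbound γ α β 0 y
    rw [mpow_zero', one_mul] at this
    refine le_trans this (master_le_Tb hC₁ hγ ?_)
    rw [msize_zero']
    omega
  · intro i y
    have := master_ptwise hf hC hbound γ α β (Pi.single i (2 * (d + 1))) y
    rw [abs_mul, mpow_pisingle, abs_pow] at this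
    refine le_trans this (master_le_Tb hC₁ hγ ?_)
    rw [msize_pisingle]

lemma sobNorm_le (hf : ContDiff ℝ (⊤ : ℕ∞) f) (hC : 0 < C)
    (hbound : ∀ (x : EuclideanSpace ℝ (Fin d)) (α β : Fin d → ℕ),
      |mpow x β * pd α f x|
        ≤ C ^ (msize α + msize β + 1) * (Nat.factorial (max (msize α) (msize β)) : ℝ))
    (k : ℕ) (α β : Fin d → ℕ) :
    sobNorm k (FF f α β)
      ≤ (((Finset.Iic ((fun _ => k) : Fin d → ℕ)).filter (fun γ => msize γ ≤ k)).card : ℝ≥0∞)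
          * (ENNReal.ofReal (Tb (max C 1) k α β * (4 * (d:ℝ) + 4) ^ (d + 1))
            * eLpNorm (phiW d) 2 volume) := by
  rw [sobNorm]
  rw [← nsmul_eq_mul]
  apply Finset.sum_le_card_nsmul
  intro γ hγ
  rw [Finset.mem_filter] at hγ
  exact master_L2 hf hC hbound k hγ.2 α β

end L2


theorem sobolev_series_converges {d : ℕ} (f : EuclideanSpace ℝ (Fin d) → ℝ)
    (hf : ContDiff ℝ (⊤ : ℕ∞) f) (C : ℝ) (hC : 0 < C)
    (hbound : ∀ (x : EuclideanSpace ℝ (Fin d)) (α β : Fin d → ℕ),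
      |mpow x β * pd α f x|
        ≤ C ^ (msize α + msize β + 1) * (Nat.factorial (max (msize α) (msize β)) : ℝ))
    (k : ℕ) :
    ∃ ε : ℝ, 0 < ε ∧
      (∑' p : (Fin d → ℕ) × (Fin d → ℕ),
        ENNReal.ofReal (ε ^ (msize p.1 + msize p.2)
            / (Nat.factorial (max (msize p.1) (msize p.2)) : ℝ))
          * sobNorm k (fun x => mpow x p.2 * pd p.1 f x)) < ⊤ := by
  classical
  set C₁ : ℝ := max C 1 with hC₁def
  have hC₁ : (1:ℝ) ≤ C₁ := le_max_right _ _
  have hC₁0 : (0:ℝ) < C₁ := lt_of_lt_of_le one_pos hC₁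
  set Q : ℕ := k + 2 * (d + 1) with hQdef
  set J : ℕ := k + Q with hJdef
  set ε : ℝ := 1 / (C₁ * 2 ^ (J + 1)) with hεdef
  have hε : 0 < ε := by positivity
  refine ⟨ε, hε, ?_⟩
  set Kd : ℝ := (4 * (d:ℝ) + 4) ^ (d + 1) with hKddef
  have hKd0 : 0 ≤ Kd := by positivity
  set A' : ℝ := 2 ^ k * 2 ^ ((Q + 1) * J) * C₁ ^ (Q + 1) with hA'def
  have hA'0 : 0 ≤ A' := by positivity
  set AA : ℝ := A' * Kd with hAAdef
  have hAA0 : 0 ≤ AA := by positivity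
  set N : ℕ := ((Finset.Iic ((fun _ => k) : Fin d → ℕ)).filter (fun γ => msize γ ≤ k)).card
    with hNdef
  set Ecst : ℝ≥0∞ := eLpNorm (phiW d) 2 volume with hEdef
  have hEfin : Ecst < ⊤ := (phiW_memLp d).2
  -- core real inequality
  have hhalf : ε * (C₁ * 2 ^ J) = 1 / 2 := by
    rw [hεdef]
    have h2 : (2:ℝ) ^ (J+1) = 2 ^ J * 2 := by rw [pow_succ]
    field_simp
    ring
  have hcore : ∀ α β : Fin d → ℕ,
      ε ^ (msize α + msize β) * Tb C₁ k α β
        ≤ A' * (1/2) ^ (msize α + msize β) * ((max (msize α) (msize β)).factorial : ℝ) := by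
    intro α β
    set n : ℕ := msize α + msize β with hn
    set B : ℕ := msize β with hB
    set M : ℕ := max (msize α) (msize β) with hM
    have hBn : B ≤ n := by omega
    have hMn : M ≤ n := by omega
    have h1 : ((M + Q).factorial : ℝ) ≤ (M.factorial : ℝ) * ((M + Q : ℕ) : ℝ) ^ Q := by
      exact_mod_cast fact_ratio M Q
    have hnat : (2 * (B + 1)) ^ k * (M + Q) ^ Q ≤ 2 ^ k * 2 ^ ((Q + 1) * J) * (2 ^ J) ^ n := by
      calc (2 * (B + 1)) ^ k * (M + Q) ^ Q
          ≤ (2 * (n + Q + 1)) ^ k * (n + Q + 1) ^ Q := by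
            apply Nat.mul_le_mul
            · exact Nat.pow_le_pow_left (by omega) k
            · exact Nat.pow_le_pow_left (by omega) Q
        _ = 2 ^ k * (n + Q + 1) ^ J := by
            rw [Nat.mul_pow, hJdef, pow_add]
            ring
        _ ≤ 2 ^ k * (2 ^ (n + Q + 1)) ^ J := by
            apply Nat.mul_le_mul_left
            exact Nat.pow_le_pow_left (Nat.le_of_lt (Nat.lt_two_pow_self)) J
        _ = 2 ^ k * 2 ^ ((Q + 1) * J) * (2 ^ J) ^ n := by
            rw [← pow_mul, ← pow_mul, ← pow_add]
            congr 1
            ring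
    have hnatR : (2 * ((B:ℝ) + 1)) ^ k * ((M + Q : ℕ) : ℝ) ^ Q
        ≤ 2 ^ k * 2 ^ ((Q + 1) * J) * ((2:ℝ) ^ J) ^ n := by
      exact_mod_cast hnat
    have hTbeq : Tb C₁ k α β
        = (((B:ℝ) + 1) * 2) ^ k * C₁ ^ (n + Q + 1) * (((M + Q).factorial : ℕ) : ℝ) := by
      rw [Tb]
    calc ε ^ n * Tb C₁ k α β
        = (((B:ℝ) + 1) * 2) ^ k * (((M + Q).factorial : ℕ) : ℝ) * (ε ^ n * C₁ ^ (n + Q + 1)) := by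
          rw [hTbeq]; ring
      _ ≤ (((B:ℝ) + 1) * 2) ^ k * ((M.factorial : ℝ) * ((M + Q : ℕ) : ℝ) ^ Q)
            * (ε ^ n * C₁ ^ (n + Q + 1)) := by
          apply mul_le_mul_of_nonneg_right
            (mul_le_mul_of_nonneg_left h1 (by positivity)) (by positivity)
      _ = ((2 * ((B:ℝ) + 1)) ^ k * ((M + Q : ℕ) : ℝ) ^ Q) * (ε ^ n * C₁ ^ (n + Q + 1))
            * (M.factorial : ℝ) := by ring_nf
      _ ≤ (2 ^ k * 2 ^ ((Q + 1) * J) * ((2:ℝ) ^ J) ^ n) * (ε ^ n * C₁ ^ (n + Q + 1))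
            * (M.factorial : ℝ) := by
          apply mul_le_mul_of_nonneg_right
            (mul_le_mul_of_nonneg_right hnatR (by positivity)) (by positivity)
      _ = A' * ((ε * (C₁ * 2 ^ J)) ^ n) * (M.factorial : ℝ) := by
          rw [hA'def, pow_add]
          rw [mul_pow, mul_pow]
          ring
      _ = A' * (1/2) ^ n * (M.factorial : ℝ) := by rw [hhalf]
  -- per-term bound in ℝ≥0∞
  have hterm : ∀ p : (Fin d → ℕ) × (Fin d → ℕ),
      ENNReal.ofReal (ε ^ (msize p.1 + msize p.2)
            / (Nat.factorial (max (msize p.1) (msize p.2)) : ℝ))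
          * sobNorm k (fun x => mpow x p.2 * pd p.1 f x)
        ≤ (N : ℝ≥0∞) * Ecst * ENNReal.ofReal AA
            * (ENNReal.ofReal (1/2)) ^ (msize p.1 + msize p.2) := by
    intro p
    obtain ⟨α, β⟩ := p
    set n : ℕ := msize α + msize β with hn
    set M : ℕ := max (msize α) (msize β) with hM
    have hMfact : (0:ℝ) < (M.factorial : ℝ) := by exact_mod_cast Nat.factorial_pos M
    have hsob : sobNorm k (fun x => mpow x β * pd α f x)
        ≤ (N : ℝ≥0∞) * (ENNReal.ofReal (Tb C₁ k α β * Kd) * Ecst) := by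
      have := sobNorm_le hf hC hbound k α β
      exact this
    calc ENNReal.ofReal (ε ^ n / (M.factorial : ℝ))
          * sobNorm k (fun x => mpow x β * pd α f x)
        ≤ ENNReal.ofReal (ε ^ n / (M.factorial : ℝ))
            * ((N : ℝ≥0∞) * (ENNReal.ofReal (Tb C₁ k α β * Kd) * Ecst)) :=
          mul_le_mul_right hsob _
      _ = (N : ℝ≥0∞) * Ecst * (ENNReal.ofReal (ε ^ n / (M.factorial : ℝ))
            * ENNReal.ofReal (Tb C₁ k α β * Kd)) := by ring
      _ = (N : ℝ≥0∞) * Ecst * ENNReal.ofReal (ε ^ n / (M.factorial : ℝ) * (Tb C₁ k α β * Kd)) := by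
          rw [← ENNReal.ofReal_mul (p := ε ^ n / (M.factorial : ℝ))
            (div_nonneg (pow_nonneg hε.le n) hMfact.le)]
      _ ≤ (N : ℝ≥0∞) * Ecst * ENNReal.ofReal (AA * (1/2) ^ n) := by
          apply mul_le_mul_right
          apply ENNReal.ofReal_le_ofReal
          have hc := hcore α β
          have hstep : ε ^ n / (M.factorial : ℝ) * (Tb C₁ k α β * Kd)
              = ε ^ n * Tb C₁ k α β * Kd / (M.factorial : ℝ) := by ring
          rw [hstep, div_le_iff₀ hMfact]
          calc ε ^ n * Tb C₁ k α β * Kd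
              ≤ A' * (1/2) ^ n * (M.factorial : ℝ) * Kd :=
                mul_le_mul_of_nonneg_right hc hKd0
            _ = AA * (1/2) ^ n * (M.factorial : ℝ) := by rw [hAAdef]; ring
      _ = (N : ℝ≥0∞) * Ecst * ENNReal.ofReal AA * (ENNReal.ofReal (1/2)) ^ n := by
          rw [ENNReal.ofReal_mul hAA0, ENNReal.ofReal_pow (by norm_num)]
          ring
  -- sum the majorant
  have hr : ENNReal.ofReal (1/2) < 1 := by
    rw [ENNReal.ofReal_lt_one]
    norm_num
  set r : ℝ≥0∞ := ENNReal.ofReal (1/2) with hrdef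
  have hS : (∑' a : Fin d → ℕ, r ^ msize a) < ⊤ := tsum_geo_multi d r hr
  have hsum2 : (∑' p : (Fin d → ℕ) × (Fin d → ℕ), r ^ (msize p.1 + msize p.2))
      = (∑' a : Fin d → ℕ, r ^ msize a) * (∑' b : Fin d → ℕ, r ^ msize b) := by
    rw [ENNReal.tsum_prod']
    calc (∑' (a : Fin d → ℕ) (b : Fin d → ℕ), r ^ (msize a + msize b))
        = ∑' (a : Fin d → ℕ), r ^ msize a * ∑' (b : Fin d → ℕ), r ^ msize b := by
          apply tsum_congr
          intro a
          rw [← ENNReal.tsum_mul_left]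
          apply tsum_congr
          intro b
          rw [pow_add]
      _ = _ := ENNReal.tsum_mul_right
  calc (∑' p : (Fin d → ℕ) × (Fin d → ℕ),
        ENNReal.ofReal (ε ^ (msize p.1 + msize p.2)
            / (Nat.factorial (max (msize p.1) (msize p.2)) : ℝ))
          * sobNorm k (fun x => mpow x p.2 * pd p.1 f x))
      ≤ ∑' p : (Fin d → ℕ) × (Fin d → ℕ),
          (N : ℝ≥0∞) * Ecst * ENNReal.ofReal AA * r ^ (msize p.1 + msize p.2) :=
        ENNReal.tsum_le_tsum hterm
    _ = (N : ℝ≥0∞) * Ecst * ENNReal.ofReal AA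
          * ∑' p : (Fin d → ℕ) × (Fin d → ℕ), r ^ (msize p.1 + msize p.2) :=
        ENNReal.tsum_mul_left
    _ < ⊤ := by
        rw [hsum2]
        exact ENNReal.mul_lt_top
          (ENNReal.mul_lt_top (ENNReal.mul_lt_top (ENNReal.natCast_lt_top N) hEfin)
            ENNReal.ofReal_lt_top)
          (ENNReal.mul_lt_top hS hS)
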